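/- For every integer n ≥ 1, the tridiagonal Toda determinant satisfies O_n = (D_{n−1} ∘ D_{n−2} ∘ ⋯ ∘ D_1)(S_n); that is, the generating polynomial of the conserved quantities of the open one-dimensional Toda lattice is obtained from S_n = ∏_{i=1}^n (X_i + μ) by successively applying the differential operators D_1, …, D_{n−1}. -/
import Mathlib


open MvPolynomial

/-- Index type for the variables `X_0, …, X_{n-1}` (as `some (Sum.inl i)`),
`Q_0, …, Q_{n-1}` (as `some (Sum.inr i)`) and `μ` (as `none`). -/
abbrev TodaIdx (n : ℕ) := Option (Fin n ⊕ Fin n)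

/-- The polynomial ring `R = ℂ[X_1,…,X_n,Q_1,…,Q_n,μ]` (indices written `0,…,n-1`). -/
abbrev TodaR (n : ℕ) := MvPolynomial (TodaIdx n) ℂ

/-- The variable `X_i`. -/
noncomputable def Xv {n : ℕ} (i : Fin n) : TodaR n := X (some (Sum.inl i))

/-- The variable `Q_i`. -/
noncomputable def Qv {n : ℕ} (i : Fin n) : TodaR n := X (some (Sum.inr i))

/-- The variable `μ`. -/
noncomputable def muv {n : ℕ} : TodaR n := X none

/-- Cyclic successor on indices: `i + 1` read modulo `n`. -/
def finSucc {n : ℕ} (i : Fin n) : Fin n := ⟨((i : ℕ) + 1) % n, Nat.mod_lt _ i.pos⟩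

/-- The differential operator `D_i = Id + Q_i ∂²/(∂X_i ∂X_{i+1})`,
indices read modulo `n`. -/
noncomputable def Dop {n : ℕ} (i : Fin n) (F : TodaR n) : TodaR n :=
  F + Qv i * pderiv (some (Sum.inl i)) (pderiv (some (Sum.inl (finSucc i))) F)

/-- The differential operator `δ_i = Id - Q_i ∂²/(∂X_i ∂X_{i+1})`. -/
noncomputable def dop {n : ℕ} (i : Fin n) (F : TodaR n) : TodaR n :=
  F - Qv i * pderiv (some (Sum.inl i)) (pderiv (some (Sum.inl (finSucc i))) F)

/-- The determinant `O_{[a,b]}` of the tridiagonal matrix with diagonal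
`X_a+μ, …, X_b+μ`, superdiagonal `Q_a, …, Q_{b-1}` and subdiagonal entries `-1`. -/
noncomputable def OI (n a b : ℕ) (hb : b < n) : TodaR n :=
  Matrix.det (Matrix.of fun i j : Fin (b + 1 - a) =>
    if (i : ℕ) = j then Xv ⟨a + i, by have := i.isLt; omega⟩ + muv
    else if (i : ℕ) + 1 = j then Qv ⟨a + i, by have := i.isLt; omega⟩
    else if (j : ℕ) + 1 = i then -1 else 0)

/-- The determinant `O_k` of the `k×k` tridiagonal matrix with diagonal
`X_0+μ, …, X_{k-1}+μ`, superdiagonal `Q_0, …, Q_{k-2}` and subdiagonal entries `-1`;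
`O_0 = 1`. -/
noncomputable def Omat (n k : ℕ) (h : k ≤ n) : TodaR n :=
  Matrix.det (Matrix.of fun i j : Fin k =>
    if (i : ℕ) = j then Xv ⟨i, by have := i.isLt; omega⟩ + muv
    else if (i : ℕ) + 1 = j then Qv ⟨i, by have := i.isLt; omega⟩
    else if (j : ℕ) + 1 = i then -1 else 0)

/-- `S_n = ∏ (X_i + μ)`. -/
noncomputable def Sn (n : ℕ) : TodaR n := ∏ i : Fin n, (Xv i + muv)

/-- The composite `D_{m-1} ∘ ⋯ ∘ D_1 ∘ D_0` (applied with `D_0` first). -/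
noncomputable def DfoldUpTo (n m : ℕ) (h : m ≤ n) (F : TodaR n) : TodaR n :=
  ((List.finRange m).map (Fin.castLE h)).foldl (fun acc i => Dop i acc) F

/-- The periodic Toda matrix `𝓛_n` over the Laurent polynomials in `z` with
coefficients in `R`: tridiagonal as in `Omat n n`, with corner entries
`(𝓛_n)_{0,n-1} = -z` and `(𝓛_n)_{n-1,0} = Q_{n-1} z⁻¹`. -/
noncomputable def Lmat (n : ℕ) (hn : 3 ≤ n) :
    Matrix (Fin n) (Fin n) (LaurentPolynomial (TodaR n)) :=
  Matrix.of fun i j =>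
    if (i : ℕ) = 0 ∧ (j : ℕ) = n - 1 then -(LaurentPolynomial.T 1)
    else if (i : ℕ) = n - 1 ∧ (j : ℕ) = 0 then
      LaurentPolynomial.C (Qv ⟨n - 1, by omega⟩) * LaurentPolynomial.T (-1)
    else if (i : ℕ) = j then LaurentPolynomial.C (Xv i + muv)
    else if (i : ℕ) + 1 = j then LaurentPolynomial.C (Qv i)
    else if (j : ℕ) + 1 = i then -1 else 0

section Aux

/-- General tridiagonal matrix with diagonal `d`, superdiagonal `u`, subdiagonal `-1`. -/
noncomputable def triM {R : Type*} [CommRing R] (d u : ℕ → R) (m : ℕ) :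
    Matrix (Fin m) (Fin m) R :=
  Matrix.of fun i j => if (i : ℕ) = j then d i
    else if (i : ℕ) + 1 = j then u i
    else if (j : ℕ) + 1 = i then -1 else 0

lemma triM_det_rec {R : Type*} [CommRing R] (d u : ℕ → R) (k : ℕ) :
    (triM d u (k + 2)).det
      = d (k + 1) * (triM d u (k + 1)).det + u k * (triM d u k).det := by
  have hcol : ∀ j : Fin k, (Fin.last k).castSucc.succAbove j.castSucc
      = j.castSucc.castSucc := by
    intro j
    exact Fin.succAbove_of_castSucc_lt _ _ (by simp [Fin.lt_def, j.isLt])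
  have hlastcol : (Fin.last k).castSucc.succAbove (Fin.last k) = Fin.last (k+1) := by
    rw [Fin.succAbove_of_le_castSucc _ _ le_rfl, Fin.succ_last]
  rw [show (k + 2) = (k + 1) + 1 from rfl,
    Matrix.det_succ_row (triM d u ((k+1)+1)) (Fin.last (k+1)),
    Fin.sum_univ_castSucc, Fin.sum_univ_castSucc]
  have hz : ∀ i : Fin k,
      (-1 : R) ^ ((Fin.last (k+1) : ℕ) + ((i.castSucc.castSucc : Fin (k+2)) : ℕ)) *
        triM d u (k+2) (Fin.last (k+1)) i.castSucc.castSucc *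
        ((triM d u (k+2)).submatrix (Fin.last (k+1)).succAbove
          (i.castSucc.castSucc).succAbove).det = 0 := by
    intro i
    have h1 : triM d u (k+2) (Fin.last (k+1)) i.castSucc.castSucc = 0 := by
      have := i.isLt
      simp only [triM, Matrix.of_apply, Fin.val_last, Fin.coe_castSucc]
      rw [if_neg (by omega), if_neg (by omega), if_neg (by omega)]
    rw [h1, mul_zero, zero_mul]
  rw [Finset.sum_congr rfl (fun i _ => hz i), Finset.sum_const_zero]
  have hm1 : ((triM d u (k+2)).submatrix (Fin.last (k+1)).succAbove
      (Fin.last (k+1)).succAbove) = triM d u (k+1) := by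
    ext i j
    simp [triM, Matrix.submatrix_apply, Fin.succAbove_last, Fin.coe_castSucc]
  have e2 : triM d u (k+2) (Fin.last (k+1)) (Fin.last (k+1)) = d (k+1) := by
    simp [triM]
  rw [hm1, e2]
  have hN : ((triM d u (k+2)).submatrix (Fin.last (k+1)).succAbove
      (Fin.last k).castSucc.succAbove).det = u k * (triM d u k).det := by
    rw [Matrix.det_succ_column _ (Fin.last k), Fin.sum_univ_castSucc]
    have hz2 : ∀ i : Fin k, (-1:R) ^ (((i.castSucc : Fin (k+1)) : ℕ) + ((Fin.last k : Fin (k+1)) : ℕ)) *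
        ((triM d u (k+2)).submatrix (Fin.last (k+1)).succAbove
          (Fin.last k).castSucc.succAbove) i.castSucc (Fin.last k) *
        ((((triM d u (k+2)).submatrix (Fin.last (k+1)).succAbove
          (Fin.last k).castSucc.succAbove)).submatrix i.castSucc.succAbove
            (Fin.last k).succAbove).det = 0 := by
      intro i
      have h0 : ((triM d u (k+2)).submatrix (Fin.last (k+1)).succAbove
          (Fin.last k).castSucc.succAbove) i.castSucc (Fin.last k) = 0 := by
        have hi := i.isLt
        rw [Matrix.submatrix_apply, Fin.succAbove_last, hlastcol]
        simp only [triM, Matrix.of_apply, Fin.coe_castSucc, Fin.val_last]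
        rw [if_neg (by omega), if_neg (by omega), if_neg (by omega)]
      rw [h0, mul_zero, zero_mul]
    rw [Finset.sum_congr rfl (fun i _ => hz2 i), Finset.sum_const_zero, zero_add]
    have hmm : (((triM d u (k+2)).submatrix (Fin.last (k+1)).succAbove
        (Fin.last k).castSucc.succAbove).submatrix (Fin.last k).succAbove
          (Fin.last k).succAbove) = triM d u k := by
      ext i j
      simp only [Matrix.submatrix_apply, Fin.succAbove_last, hcol]
      simp [triM]
    have hee : ((triM d u (k+2)).submatrix (Fin.last (k+1)).succAbove
        (Fin.last k).castSucc.succAbove) (Fin.last k) (Fin.last k) = u k := by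
      rw [Matrix.submatrix_apply, Fin.succAbove_last, hlastcol]
      have h1 : (((Fin.last k).castSucc : Fin (k+2)) : ℕ) = k := rfl
      have h2 : ((Fin.last (k+1) : Fin (k+2)) : ℕ) = k+1 := rfl
      simp only [triM, Matrix.of_apply, h1, h2]
      rw [if_neg (by omega)]
      simp
    rw [hmm, hee]
    have hev : Even ((Fin.last k : ℕ) + (Fin.last k : ℕ)) := ⟨k, by simp [Fin.val_last]⟩
    rw [Even.neg_one_pow hev, one_mul]
  rw [hN]
  have e3 : triM d u ((k+1)+1) (Fin.last (k+1)) (Fin.last k).castSucc = -1 := by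
    have h1 : (((Fin.last k).castSucc : Fin (k+2)) : ℕ) = k := rfl
    have h2 : ((Fin.last (k+1) : Fin (k+2)) : ℕ) = k+1 := rfl
    simp only [triM, Matrix.of_apply, h1, h2]
    rw [if_neg (by omega), if_neg (by omega)]
    simp
  rw [e3]
  have hodd : Odd ((Fin.last (k+1) : ℕ) + ((Fin.last k).castSucc : ℕ)) := by
    simp only [Fin.val_last, Fin.coe_castSucc]
    exact ⟨k, by ring⟩
  have hev2 : Even ((Fin.last (k+1) : ℕ) + (Fin.last (k+1) : ℕ)) := ⟨k+1, by simp [Fin.val_last]⟩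
  rw [Odd.neg_one_pow hodd, Even.neg_one_pow hev2]
  ring

end Aux

section Aux2
variable {n : ℕ}

/-- Diagonal sequence for the Toda matrix. -/
noncomputable def dseq (n : ℕ) : ℕ → TodaR n := fun i =>
  if hi : i < n then Xv ⟨i, hi⟩ + muv else 0

/-- Superdiagonal sequence for the Toda matrix. -/
noncomputable def useq (n : ℕ) : ℕ → TodaR n := fun i =>
  if hi : i < n then Qv ⟨i, hi⟩ else 0

lemma Omat_eq_triM (k : ℕ) (h : k ≤ n) :
    Omat n k h = (triM (dseq n) (useq n) k).det := by
  unfold Omat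
  congr 1
  ext i j
  have hi : (i : ℕ) < n := lt_of_lt_of_le i.isLt h
  simp only [triM, Matrix.of_apply, dseq, useq, dif_pos hi]

lemma Omat_zero (h : 0 ≤ n) : Omat n 0 h = 1 := Matrix.det_fin_zero

lemma Omat_one (h : 1 ≤ n) : Omat n 1 h = Xv ⟨0, h⟩ + muv := by
  rw [Omat, Matrix.det_fin_one]
  simp

lemma Omat_rec (k : ℕ) (h : k + 2 ≤ n) :
    Omat n (k+2) h = (Xv ⟨k+1, by omega⟩ + muv) * Omat n (k+1) (by omega)
      + Qv ⟨k, by omega⟩ * Omat n k (by omega) := by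
  rw [Omat_eq_triM, Omat_eq_triM, Omat_eq_triM, triM_det_rec]
  rw [dseq, useq, dif_pos (by omega : k + 1 < n), dif_pos (by omega : k < n)]

lemma pderiv_muv (j : Fin n) : pderiv (some (Sum.inl j)) (muv : TodaR n) = 0 := by
  rw [muv, pderiv_X_of_ne (by simp)]

lemma pderiv_Xv (j i : Fin n) :
    pderiv (some (Sum.inl j)) (Xv i : TodaR n) = if j = i then 1 else 0 := by
  by_cases h : j = i
  · subst h; rw [if_pos rfl, Xv, pderiv_X_self]
  · rw [if_neg h, Xv, pderiv_X_of_ne (by simp [Ne.symm h])]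

lemma pderiv_Qv (j i : Fin n) : pderiv (some (Sum.inl j)) (Qv i : TodaR n) = 0 := by
  rw [Qv, pderiv_X_of_ne (by simp)]

lemma pderiv_Omat_zero (j : Fin n) : ∀ (k : ℕ) (hk : k ≤ n), k ≤ (j : ℕ) →
    pderiv (some (Sum.inl j)) (Omat n k hk) = 0 := by
  intro k
  induction k using Nat.twoStepInduction with
  | zero =>
    intro hk _
    rw [Omat_zero]
    simp
  | one =>
    intro hk hj
    have hne : j ≠ (⟨0, hk⟩ : Fin n) := by
      intro he
      have h2 := congrArg Fin.val he
      simp at h2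
      omega
    rw [Omat_one, map_add, pderiv_muv, pderiv_Xv, if_neg hne]
    simp
  | more k ih1 ih2 =>
    intro hk hj
    have hne : j ≠ (⟨k+1, by omega⟩ : Fin n) := by
      intro he
      have h2 := congrArg Fin.val he
      simp at h2
      omega
    rw [Omat_rec, map_add, pderiv_mul, pderiv_mul, map_add, pderiv_muv, pderiv_Xv,
      pderiv_Qv, ih1 (by omega) (by omega), ih2 (by omega) (by omega), if_neg hne]
    ring

lemma pderiv_Omat_succ (k : ℕ) (hk : k + 1 ≤ n) :
    pderiv (some (Sum.inl (⟨k, by omega⟩ : Fin n))) (Omat n (k+1) hk)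
      = Omat n k (by omega) := by
  cases k with
  | zero =>
    rw [Omat_one, Omat_zero, map_add, pderiv_muv, pderiv_Xv, if_pos rfl]
    simp
  | succ k =>
    rw [Omat_rec, map_add, pderiv_mul, pderiv_mul, map_add, pderiv_muv, pderiv_Xv,
      pderiv_Qv, pderiv_Omat_zero _ _ (by omega) (by simp),
      pderiv_Omat_zero _ _ (by omega) (by simp), if_pos rfl]
    ring

/-- Tail product `∏_{i ≥ m} (X_i + μ)`. -/
noncomputable def Tail (n m : ℕ) : TodaR n :=
  ∏ i : Fin n, if m ≤ (i : ℕ) then (Xv i + muv) else 1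

lemma Tail_of_ge {m : ℕ} (hm : n ≤ m) : Tail n m = 1 :=
  Finset.prod_eq_one (fun i _ => if_neg (by have := i.isLt; omega))

lemma Tail_succ {m : ℕ} (hm : m < n) :
    Tail n m = (Xv ⟨m, hm⟩ + muv) * Tail n (m+1) := by
  rw [Tail, Tail, ← Finset.mul_prod_erase _ _ (Finset.mem_univ (⟨m, hm⟩ : Fin n)),
    ← Finset.mul_prod_erase _ _ (Finset.mem_univ (⟨m, hm⟩ : Fin n)),
    if_pos (by simp), if_neg (by simp)]
  rw [one_mul]
  congr 1
  refine Finset.prod_congr rfl (fun i hi => ?_)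
  have hne : (i : ℕ) ≠ m := by
    intro he
    exact (Finset.mem_erase.mp hi).1 (Fin.ext he)
  by_cases h : m + 1 ≤ (i : ℕ)
  · rw [if_pos h, if_pos (by omega)]
  · rw [if_neg h, if_neg (by omega)]

lemma pderiv_Tail_zero (j : Fin n) : ∀ (m : ℕ), (j : ℕ) < m →
    pderiv (some (Sum.inl j)) (Tail n m) = 0 := by
  have H : ∀ (d m : ℕ), n ≤ m + d → (j : ℕ) < m →
      pderiv (some (Sum.inl j)) (Tail n m) = 0 := by
    intro d
    induction d with
    | zero =>
      intro m hm hj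
      rw [Tail_of_ge (by omega)]
      simp
    | succ d ih =>
      intro m hm hj
      by_cases hmn : n ≤ m
      · rw [Tail_of_ge hmn]; simp
      · have hne : j ≠ (⟨m, by omega⟩ : Fin n) := by
          intro he
          have h2 := congrArg Fin.val he
          simp at h2
          omega
        rw [Tail_succ (by omega), pderiv_mul, map_add, pderiv_muv, pderiv_Xv,
          if_neg hne, ih (m+1) (by omega) (by omega)]
        ring
  intro m hj
  exact H n m (by omega) hj

end Aux2

section Aux3
variable {n : ℕ}

lemma DfoldUpTo_succ (m : ℕ) (h : m + 1 ≤ n) (F : TodaR n) :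
    DfoldUpTo n (m+1) h F = Dop ⟨m, by omega⟩ (DfoldUpTo n m (by omega) F) := by
  rw [DfoldUpTo, DfoldUpTo, List.finRange_succ_last, List.map_append, List.foldl_append,
    List.map_map]
  have h1 : Fin.castLE h ∘ Fin.castSucc = Fin.castLE (by omega : m ≤ n) := by
    funext i; exact Fin.ext rfl
  have h2 : Fin.castLE h (Fin.last m) = (⟨m, by omega⟩ : Fin n) := Fin.ext rfl
  rw [h1]
  simp [h2]

lemma finSucc_mk (m : ℕ) (hm : m + 1 < n) :
    finSucc (⟨m, by omega⟩ : Fin n) = ⟨m+1, hm⟩ :=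
  Fin.ext (by simp [finSucc, Nat.mod_eq_of_lt hm])

lemma Sn_eq_Tail : Sn n = Tail n 0 :=
  Finset.prod_congr rfl (fun i _ => (if_pos (Nat.zero_le _)).symm)

lemma key (hn : 1 ≤ n) : ∀ (m : ℕ) (hm : m + 1 ≤ n),
    DfoldUpTo n m (by omega) (Sn n) = Omat n (m+1) hm * Tail n (m+1) := by
  intro m
  induction m with
  | zero =>
    intro hm
    rw [show DfoldUpTo n 0 (by omega) (Sn n) = Sn n from rfl, Sn_eq_Tail, Omat_one,
      Tail_succ (show 0 < n by omega)]
  | succ m ih =>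
    intro hm
    rw [DfoldUpTo_succ m (by omega), ih (by omega), Dop, finSucc_mk m (by omega)]
    have hinner : pderiv (some (Sum.inl (⟨m+1, by omega⟩ : Fin n)))
        (Omat n (m+1) (by omega) * Tail n (m+1))
        = Omat n (m+1) (by omega) * Tail n (m+2) := by
      rw [pderiv_mul, pderiv_Omat_zero _ (m+1) (by omega) (by simp),
        Tail_succ (show m+1 < n by omega), pderiv_mul, map_add, pderiv_muv, pderiv_Xv,
        if_pos rfl, pderiv_Tail_zero _ (m+2) (by simp)]
      ring
    rw [hinner]
    have houter : pderiv (some (Sum.inl (⟨m, by omega⟩ : Fin n)))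
        (Omat n (m+1) (by omega) * Tail n (m+2))
        = Omat n m (by omega) * Tail n (m+2) := by
      rw [pderiv_mul, pderiv_Omat_succ m (by omega), pderiv_Tail_zero _ (m+2) (by simp)]
      ring
    rw [houter, Omat_rec m (by omega), Tail_succ (show m+1 < n by omega)]
    ring

end Aux3


/-- For every `n ≥ 1`, the open Toda determinant satisfies
`O_n = (D_{n-1} ∘ ⋯ ∘ D_1)(S_n)` (indices written `0,…,n-2`): the generating polynomial of the
conserved quantities of the open Toda lattice is obtained from `S_n` by applying
the first `n-1` operators `D_i`. -/
theorem openToda_det_eq_Dfold (n : ℕ) (hn : 1 ≤ n) :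
    Omat n n le_rfl = DfoldUpTo n (n - 1) (by omega) (Sn n) := by
  obtain ⟨m, rfl⟩ : ∃ m, n = m + 1 := ⟨n - 1, by omega⟩
  show Omat (m+1) (m+1) le_rfl = DfoldUpTo (m+1) m (by omega) (Sn (m+1))
  rw [key hn m le_rfl, Tail_of_ge le_rfl, mul_one]
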